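/- arXiv:2308.03911 — 4 statements merged into one kernel-verified Lean document; each statement's English description precedes it below -/
import Mathlib

section
/- Let f be analytic and locally injective on the unit disk D with f'(z) ≠ 0 for all z ∈ D, and suppose Re{1 + z f''(z)/f'(z)} ≥ 0 on D (f convex). Define φ(z) = f''(z)/(2f'(z) + z f''(z)). Then |φ(z)| ≤ 1 for all z ∈ D; equivalently the pole p(ζ) = ζ + 2f'(ζ)/f''(ζ) of each BMA satisfies |p(ζ)| ≥ 1 wherever f''(ζ) ≠ 0. -/
/-!
With `p z = 1 + z f''(z)/f'(z)` we have `p 0 = 1` and `Re p ≥ 0`, so the Cayley transform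
`(p - 1)/(p + 1)` maps the unit disk into the closed unit disk and vanishes at `0`. This transform
is exactly `z φ(z)`, hence Schwarz's lemma gives `‖φ‖ ≤ 1`, and the pole `p(ζ)` is `1/φ(ζ)`.
-/

open Complex Metric

/-- Schwarz's lemma for `φ`, read off `z ↦ z • φ z`. -/
theorem norm_le_div_of_forall_norm_smul_le {E : Type*} [NormedAddCommGroup E] [NormedSpace ℂ E]
    {φ : ℂ → E} {R₁ R₂ : ℝ} (hd : DifferentiableOn ℂ φ (ball 0 R₁))
    (h : ∀ z ∈ ball (0 : ℂ) R₁, ‖z • φ z‖ ≤ R₂) {z : ℂ} (hz : z ∈ ball 0 R₁) :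
    ‖φ z‖ ≤ R₂ / R₁ := by
  set g : ℂ → E := fun x => x • φ x
  have hg : DifferentiableOn ℂ g (ball 0 R₁) := differentiableOn_id.smul hd
  have hmaps : Set.MapsTo g (ball 0 R₁) (closedBall (g 0) R₂) := fun x hx => by
    simpa [g] using h x hx
  have hslope : dslope g 0 z = φ z := by
    rcases eq_or_ne z 0 with rfl | hz0
    · have hφ := (hd.differentiableAt (isOpen_ball.mem_nhds hz)).hasDerivAt
      simpa [g] using ((hasDerivAt_id' (0 : ℂ)).fun_smul hφ).deriv
    · simpa using dslope_sub_smul_of_ne φ hz0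
  simpa [hslope] using norm_dslope_le_div_of_mapsTo_ball hg hmaps hz

theorem add_one_ne_zero_of_re_nonneg {w : ℂ} (hw : 0 ≤ w.re) : w + 1 ≠ 0 := fun h => by
  have := congrArg re h
  simp only [add_re, one_re, zero_re] at this
  linarith

theorem norm_sub_one_div_add_one_le_one {w : ℂ} (hw : 0 ≤ w.re) : ‖(w - 1) / (w + 1)‖ ≤ 1 := by
  rw [norm_div, div_le_one (norm_pos_iff.mpr (add_one_ne_zero_of_re_nonneg hw)),
    ← sq_le_sq₀ (norm_nonneg _) (norm_nonneg _), ← normSq_eq_norm_sq, ← normSq_eq_norm_sq]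
  simp only [normSq_apply, sub_re, add_re, sub_im, add_im, one_re, one_im]
  nlinarith

section FieldIdentities

variable {K : Type*} [Field K] {a b z : K}

theorem two_mul_add_mul_eq_mul (ha : a ≠ 0) : 2 * a + z * b = a * (1 + z * (b / a) + 1) := by
  field_simp
  ring

theorem mul_div_two_mul_add_mul_eq (ha : a ≠ 0) :
    z * (b / (2 * a + z * b)) = (1 + z * (b / a) - 1) / (1 + z * (b / a) + 1) := by
  rw [two_mul_add_mul_eq_mul ha, ← div_div]
  ring

theorem add_two_mul_div_eq_inv (hb : b ≠ 0) : z + 2 * a / b = (b / (2 * a + z * b))⁻¹ := by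
  rw [inv_div]
  field_simp
  ring

end FieldIdentities

/-- If `f` is convex on the unit disk then `|φ| ≤ 1`, i.e. all BMA poles lie
outside the open unit disk. -/
theorem convex_implies_poles_outside (f : ℂ → ℂ)
    (hf : ∀ z ∈ ball (0 : ℂ) 1, AnalyticAt ℂ f z)
    (hf' : ∀ z ∈ ball (0 : ℂ) 1, deriv f z ≠ 0)
    (hconv : ∀ z ∈ ball (0 : ℂ) 1,
      0 ≤ (1 + z * (deriv (deriv f) z / deriv f z)).re) :
    (∀ z ∈ ball (0 : ℂ) 1,
        2 * deriv f z + z * deriv (deriv f) z ≠ 0 ∧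
        ‖deriv (deriv f) z / (2 * deriv f z + z * deriv (deriv f) z)‖ ≤ 1) ∧
      ∀ ζ ∈ ball (0 : ℂ) 1, deriv (deriv f) ζ ≠ 0 →
        1 ≤ ‖ζ + 2 * deriv f ζ / deriv (deriv f) ζ‖ := by
  have hf₁ : AnalyticOnNhd ℂ (deriv f) (ball 0 1) := AnalyticOnNhd.deriv hf
  have hf₂ : AnalyticOnNhd ℂ (deriv (deriv f)) (ball 0 1) := hf₁.deriv
  have hden : ∀ z ∈ ball (0 : ℂ) 1, 2 * deriv f z + z * deriv (deriv f) z ≠ 0 := fun z hz => by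
    rw [two_mul_add_mul_eq_mul (hf' z hz)]
    exact mul_ne_zero (hf' z hz) (add_one_ne_zero_of_re_nonneg (hconv z hz))
  set φ : ℂ → ℂ := fun z => deriv (deriv f) z / (2 * deriv f z + z * deriv (deriv f) z)
  have hφ_diff : DifferentiableOn ℂ φ (ball 0 1) := fun z hz =>
    ((hf₂ z hz).differentiableAt.div (by fun_prop) (hden z hz)).differentiableWithinAt
  have hφ_smul : ∀ z ∈ ball (0 : ℂ) 1, ‖z • φ z‖ ≤ 1 := fun z hz => by
    rw [smul_eq_mul, mul_div_two_mul_add_mul_eq (hf' z hz)]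
    exact norm_sub_one_div_add_one_le_one (hconv z hz)
  have hφ : ∀ z ∈ ball (0 : ℂ) 1, ‖φ z‖ ≤ 1 := fun z hz => by
    simpa using norm_le_div_of_forall_norm_smul_le hφ_diff hφ_smul hz
  refine ⟨fun z hz => ⟨hden z hz, hφ z hz⟩, fun ζ hζ hb => ?_⟩
  rw [add_two_mul_div_eq_inv hb, norm_inv]
  exact (one_le_inv₀ (norm_pos_iff.2 (div_ne_zero hb (hden ζ hζ)))).2 (hφ ζ hζ)
end

section
/- Let f be analytic on the unit disk D with f' never zero, and suppose that for every ζ ∈ D with f''(ζ) ≠ 0 the pole p(ζ) = ζ + 2f'(ζ)/f''(ζ) satisfies |p(ζ)| ≥ 1. Then Re{1 + z f''(z)/f'(z)} ≥ 0 for all z ∈ D, i.e., f is convex. -/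
/-!
The argument is pointwise. Put `w = z f''(z) / f'(z)`; then the pole is `p = z (w + 2) / w`.
If `Re (1 + w) < 0`, then `w` is closer to `-2` than to `0`, i.e. `|w + 2| < |w|`, so
`|p| < |z| < 1`, contradicting the hypothesis on the poles.
-/

open Complex Metric

theorem Complex.norm_add_two_lt_norm_iff (w : ℂ) : ‖w + 2‖ < ‖w‖ ↔ w.re < -1 := by
  rw [← sq_lt_sq₀ (norm_nonneg _) (norm_nonneg _), Complex.sq_norm, Complex.sq_norm,
    normSq_apply, normSq_apply]
  simp only [add_re, add_im, re_ofNat, im_ofNat, add_zero]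
  constructor <;> intro h <;> nlinarith

theorem Complex.re_one_add_mul_div_nonneg {z a b : ℂ} (hz : ‖z‖ < 1)
    (hpole : b ≠ 0 → 1 ≤ ‖z + 2 * a / b‖) : 0 ≤ (1 + z * (b / a)).re := by
  by_contra! hneg
  set w := z * (b / a) with hw
  have hw_re : w.re < -1 := by
    rw [add_re, one_re] at hneg
    linarith
  have hw0 : w ≠ 0 := fun h ↦ by norm_num [h] at hw_re
  obtain ⟨hz0, hb, ha⟩ : z ≠ 0 ∧ b ≠ 0 ∧ a ≠ 0 := by
    simpa only [hw, mul_ne_zero_iff, div_ne_zero_iff] using hw0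
  have hp_eq : z + 2 * a / b = z * (w + 2) / w := by
    rw [hw]
    field_simp
  have hp_lt : ‖z + 2 * a / b‖ < 1 := by
    rw [hp_eq, norm_div, norm_mul, div_lt_one (norm_pos_iff.mpr hw0)]
    calc ‖z‖ * ‖w + 2‖ ≤ ‖w + 2‖ := mul_le_of_le_one_left (norm_nonneg _) hz.le
      _ < ‖w‖ := (norm_add_two_lt_norm_iff w).mpr hw_re
  exact (hpole hb).not_gt hp_lt

theorem poles_outside_implies_convex_general (f : ℂ → ℂ)
    (hpole : ∀ ζ ∈ ball (0 : ℂ) 1, deriv (deriv f) ζ ≠ 0 →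
      1 ≤ ‖ζ + 2 * deriv f ζ / deriv (deriv f) ζ‖) :
    ∀ z ∈ ball (0 : ℂ) 1,
      0 ≤ (1 + z * (deriv (deriv f) z / deriv f z)).re :=
  fun z hz ↦ re_one_add_mul_div_nonneg (mem_ball_zero_iff.mp hz) (hpole z hz)

/-- If every BMA pole of `f` lies outside the open unit disk then `f` is convex. -/
theorem poles_outside_implies_convex (f : ℂ → ℂ)
    (hf : ∀ z ∈ ball (0 : ℂ) 1, AnalyticAt ℂ f z)
    (hf' : ∀ z ∈ ball (0 : ℂ) 1, deriv f z ≠ 0)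
    (hpole : ∀ ζ ∈ ball (0 : ℂ) 1, deriv (deriv f) ζ ≠ 0 →
      1 ≤ ‖ζ + 2 * deriv f ζ / deriv (deriv f) ζ‖) :
    ∀ z ∈ ball (0 : ℂ) 1,
      0 ≤ (1 + z * (deriv (deriv f) z / deriv f z)).re :=
  poles_outside_implies_convex_general f hpole
end

section
/- Let g be analytic on the punctured unit disk with a simple pole at 0, g' never zero, and suppose Re{1 + z g''(z)/g'(z)} ≤ 0 for 0 < |z| < 1 (g concave). Define ω by z²ω(z)·g''(z) = 2g'(z) + z g''(z). Then ω extends analytically to D with |ω(z)| ≤ |z| for all z ∈ D; consequently, for every ζ with 0 < |ζ| < 1 and g''(ζ) ≠ 0, the pole p(ζ) = ζ + 2g'(ζ)/g''(ζ) of the BMA satisfies |p(ζ)| < 1. -/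
/-!
Write `g = G / z`. Then `z³ g'' = z² G'' - 2 z G' + 2 G =: D`, with `D 0 = 2 G 0 ≠ 0`, and `D`
is nonzero elsewhere because concavity forces `g'' ≠ 0`; hence `ω = z G'' / D` is
analytic on the disk with `ω 0 = 0`. With `t = z g'' / g'` the identity reads
`z ω = (t + 2) / t`, and `Re t ≤ -1` gives `‖z ω‖ ≤ 1`. Schwarz's lemma applied to `z ω`
gives `‖ω‖ ≤ 1`, and applied again to `ω` gives `‖ω z‖ ≤ ‖z‖`. Finally the pole
`ζ + 2 g'/g''` equals `ζ² ω(ζ)`, of modulus at most `‖ζ‖³ < 1`.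
-/

open Complex Metric Set

theorem norm_add_two_le_norm_of_re_le_neg_one {t : ℂ} (ht : t.re ≤ -1) : ‖t + 2‖ ≤ ‖t‖ := by
  have : normSq (t + 2) ≤ normSq t := by
    simp only [normSq_apply, add_re, add_im, re_ofNat, im_ofNat]
    nlinarith
  rw [← sq_le_sq₀ (norm_nonneg _) (norm_nonneg _), Complex.sq_norm, Complex.sq_norm]
  exact this

theorem norm_mul_le_one_of_re_one_add_mul_div_nonpos {z w a b : ℂ}
    (hconc : (1 + z * (b / a)).re ≤ 0) (heq : z ^ 2 * w * b = 2 * a + z * b) :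
    ‖z * w‖ ≤ 1 := by
  have ht0 : z * (b / a) ≠ 0 := by rintro h; norm_num [h] at hconc
  have ha : a ≠ 0 := by rintro rfl; simp at ht0
  have hzw : z * w = (z * (b / a) + 2) / (z * (b / a)) := by
    rw [eq_div_iff ht0]
    field_simp
    linear_combination heq
  rw [hzw, norm_div, div_le_one (norm_pos_iff.2 ht0)]
  refine norm_add_two_le_norm_of_re_le_neg_one ?_
  rw [add_re, one_re] at hconc
  linarith

theorem norm_add_two_mul_div_lt_one {z w a b : ℂ} (hb : b ≠ 0)
    (heq : z ^ 2 * w * b = 2 * a + z * b) (hw : ‖w‖ ≤ ‖z‖) (hz : ‖z‖ < 1) :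
    ‖z + 2 * a / b‖ < 1 := by
  have hpole : z + 2 * a / b = z ^ 2 * w := by
    field_simp
    linear_combination -heq
  calc ‖z + 2 * a / b‖ = ‖z‖ ^ 2 * ‖w‖ := by rw [hpole, norm_mul, norm_pow]
    _ ≤ ‖z‖ ^ 2 * ‖z‖ := by gcongr
    _ = ‖z‖ ^ 3 := by ring
    _ < 1 := pow_lt_one₀ (norm_nonneg z) hz (by norm_num)

theorem norm_le_norm_of_norm_mul_le_one {f : ℂ → ℂ} (hf : DifferentiableOn ℂ f (ball 0 1))
    (h₀ : f 0 = 0) (hbound : ∀ z ∈ ball (0 : ℂ) 1, z ≠ 0 → ‖z * f z‖ ≤ 1) {z : ℂ}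
    (hz : ‖z‖ < 1) : ‖f z‖ ≤ ‖z‖ := by
  have hmaps : MapsTo (fun w => w * f w) (ball 0 1) (closedBall 0 1) := fun w hw => by
    rw [mem_closedBall_zero_iff]
    rcases eq_or_ne w 0 with rfl | hw0
    · simp
    · exact hbound w hw hw0
  have hmul : ∀ w ∈ ball (0 : ℂ) 1, ‖w * f w‖ ≤ ‖w‖ := fun w hw =>
    norm_le_norm_of_mapsTo_ball (differentiableOn_id.mul hf) hmaps (by simp)
      (mem_ball_zero_iff.1 hw)
  refine norm_le_norm_of_mapsTo_ball hf (fun w hw => ?_) h₀ hz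
  rw [mem_closedBall_zero_iff]
  rcases eq_or_ne w 0 with rfl | hw0
  · simp [h₀]
  · have := hmul w hw
    rw [norm_mul] at this
    exact le_of_mul_le_mul_left (by simpa using this) (norm_pos_iff.2 hw0)

section DivId

variable {g G : ℂ → ℂ} {U : Set ℂ} {z : ℂ}

theorem deriv_eq_of_eqOn_div_id (hU : IsOpen U) (hU0 : (0 : ℂ) ∉ U)
    (hG : DifferentiableOn ℂ G U) (hgG : EqOn g (fun w => G w / w) U) (hz : z ∈ U) :
    deriv g z = (z * deriv G z - G z) / z ^ 2 := by
  have hz0 : z ≠ 0 := ne_of_mem_of_not_mem hz hU0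
  rw [(hgG.eventuallyEq_of_mem (hU.mem_nhds hz)).deriv_eq,
    ((hG.differentiableAt (hU.mem_nhds hz)).hasDerivAt.fun_div (hasDerivAt_id' z) hz0).deriv]
  ring

theorem deriv_deriv_eq_of_eqOn_div_id (hU : IsOpen U) (hU0 : (0 : ℂ) ∉ U)
    (hG : AnalyticOnNhd ℂ G U) (hgG : EqOn g (fun w => G w / w) U) (hz : z ∈ U) :
    deriv (deriv g) z =
      (z ^ 2 * deriv (deriv G) z - 2 * z * deriv G z + 2 * G z) / z ^ 3 := by
  have hz0 : z ≠ 0 := ne_of_mem_of_not_mem hz hU0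
  have hg' : EqOn (deriv g) (fun w => (w * deriv G w - G w) / w ^ 2) U := fun w hw =>
    deriv_eq_of_eqOn_div_id hU hU0 hG.differentiableOn hgG hw
  have hG' := (hG.deriv z hz).differentiableAt.hasDerivAt
  have hnum := ((hasDerivAt_id' z).fun_mul hG').fun_sub (hG z hz).differentiableAt.hasDerivAt
  rw [(hg'.eventuallyEq_of_mem (hU.mem_nhds hz)).deriv_eq,
    (hnum.fun_div (hasDerivAt_pow 2 z) (pow_ne_zero 2 hz0)).deriv]
  field_simp
  ring

theorem exists_omega_of_eqOn_div_id (hU : IsOpen U)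
    (hG : AnalyticOnNhd ℂ G U) (hG0 : G 0 ≠ 0) (hgG : ∀ z ∈ U, z ≠ 0 → g z = G z / z)
    (hg'' : ∀ z ∈ U, z ≠ 0 → deriv (deriv g) z ≠ 0) :
    ∃ ω : ℂ → ℂ, AnalyticOnNhd ℂ ω U ∧ ω 0 = 0 ∧ ∀ z ∈ U, z ≠ 0 →
      z ^ 2 * ω z * deriv (deriv g) z = 2 * deriv g z + z * deriv (deriv g) z := by
  set D : ℂ → ℂ := fun z => z ^ 2 * deriv (deriv G) z - 2 * z * deriv G z + 2 * G z
  have hV : IsOpen (U \ {0}) := hU.sdiff isClosed_singleton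
  have hV0 : (0 : ℂ) ∉ U \ {0} := fun h => h.2 rfl
  have hgG' : EqOn g (fun w => G w / w) (U \ {0}) := fun z hz => hgG z hz.1 hz.2
  have hg'_eq z (hz : z ∈ U) (hz0 : z ≠ 0) :=
    deriv_eq_of_eqOn_div_id hV hV0 (hG.mono sdiff_subset).differentiableOn hgG' ⟨hz, hz0⟩
  have hg''_eq z (hz : z ∈ U) (hz0 : z ≠ 0) : deriv (deriv g) z = D z / z ^ 3 :=
    deriv_deriv_eq_of_eqOn_div_id hV hV0 (hG.mono sdiff_subset) hgG' ⟨hz, hz0⟩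
  have hD : ∀ z ∈ U, D z ≠ 0 := by
    intro z hz
    rcases eq_or_ne z 0 with rfl | hz0
    · simpa [D] using hG0
    · have := hg'' z hz hz0
      rw [hg''_eq z hz hz0] at this
      exact (div_ne_zero_iff.1 this).1
  refine ⟨fun z => z * deriv (deriv G) z / D z, fun z hz => ?_, by simp, fun z hz hz0 => ?_⟩
  · have hG' := hG.deriv
    exact (analyticAt_id.mul (hG'.deriv z hz)).div
      ((((analyticAt_id.pow 2).mul (hG'.deriv z hz)).sub
        ((analyticAt_const.mul analyticAt_id).mul (hG' z hz))).add
        (analyticAt_const.mul (hG z hz))) (hD z hz)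
  · rw [hg'_eq z hz hz0, hg''_eq z hz hz0]
    have := hD z hz
    field_simp
    ring

end DivId

theorem concave_poles_inside_general (g G : ℂ → ℂ)
    -- simple pole at 0 : g z = G z / z with G analytic, G 0 ≠ 0
    (hG : ∀ z ∈ ball (0 : ℂ) 1, AnalyticAt ℂ G z) (hG0 : G 0 ≠ 0)
    (hgG : ∀ z ∈ ball (0 : ℂ) 1, z ≠ 0 → g z = G z / z)
    (hconc : ∀ z ∈ ball (0 : ℂ) 1, z ≠ 0 →
      (1 + z * (deriv (deriv g) z / deriv g z)).re ≤ 0) :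
    (∃ ω : ℂ → ℂ, (∀ z ∈ ball (0 : ℂ) 1, AnalyticAt ℂ ω z) ∧
        (∀ z ∈ ball (0 : ℂ) 1, ‖ω z‖ ≤ ‖z‖) ∧
        ∀ z ∈ ball (0 : ℂ) 1, z ≠ 0 →
          z ^ 2 * ω z * deriv (deriv g) z = 2 * deriv g z + z * deriv (deriv g) z) ∧
      ∀ ζ ∈ ball (0 : ℂ) 1, ζ ≠ 0 → deriv (deriv g) ζ ≠ 0 →
        ‖ζ + 2 * deriv g ζ / deriv (deriv g) ζ‖ < 1 := by
  have hg'' : ∀ z ∈ ball (0 : ℂ) 1, z ≠ 0 → deriv (deriv g) z ≠ 0 := fun z hz hz0 h => by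
    have := hconc z hz hz0
    norm_num [h] at this
  obtain ⟨ω, hω, hω0, hωeq⟩ := exists_omega_of_eqOn_div_id isOpen_ball hG hG0 hgG hg''
  have hωle : ∀ z ∈ ball (0 : ℂ) 1, ‖ω z‖ ≤ ‖z‖ := fun z hz =>
    norm_le_norm_of_norm_mul_le_one hω.differentiableOn hω0
      (fun w hw hw0 => norm_mul_le_one_of_re_one_add_mul_div_nonpos (hconc w hw hw0)
        (hωeq w hw hw0)) (mem_ball_zero_iff.1 hz)
  exact ⟨⟨ω, hω, hωle, hωeq⟩, fun ζ hζ hζ0 hζg =>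
    norm_add_two_mul_div_lt_one hζg (hωeq ζ hζ hζ0) (hωle ζ hζ) (mem_ball_zero_iff.1 hζ)⟩

/-- For a concave mapping `g` of the unit disk with a simple pole at `0`, the
function `ω` with `z²ω g'' = 2g' + z g''` extends analytically with
`|ω(z)| ≤ |z|`, and every BMA pole lies in the open unit disk. -/
theorem concave_poles_inside (g G : ℂ → ℂ)
    -- simple pole at 0 : g z = G z / z with G analytic, G 0 ≠ 0
    (hG : ∀ z ∈ ball (0 : ℂ) 1, AnalyticAt ℂ G z) (hG0 : G 0 ≠ 0)
    (hgG : ∀ z ∈ ball (0 : ℂ) 1, z ≠ 0 → g z = G z / z)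
    (hg' : ∀ z ∈ ball (0 : ℂ) 1, z ≠ 0 → deriv g z ≠ 0)
    (hconc : ∀ z ∈ ball (0 : ℂ) 1, z ≠ 0 →
      (1 + z * (deriv (deriv g) z / deriv g z)).re ≤ 0) :
    (∃ ω : ℂ → ℂ, (∀ z ∈ ball (0 : ℂ) 1, AnalyticAt ℂ ω z) ∧
        (∀ z ∈ ball (0 : ℂ) 1, ‖ω z‖ ≤ ‖z‖) ∧
        ∀ z ∈ ball (0 : ℂ) 1, z ≠ 0 →
          z ^ 2 * ω z * deriv (deriv g) z = 2 * deriv g z + z * deriv (deriv g) z) ∧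
      ∀ ζ ∈ ball (0 : ℂ) 1, ζ ≠ 0 → deriv (deriv g) ζ ≠ 0 →
        ‖ζ + 2 * deriv g ζ / deriv (deriv g) ζ‖ < 1 :=
  concave_poles_inside_general g G hG hG0 hgG hconc
end

section
/- Let f map the unit disk conformally onto a convex n-gon with prevertices the roots on the unit circle of zB(z) = 1, where B is a Blaschke product of degree n−1, and 1 + z f''/f' = (1+zB)/(1−zB). Let φ(t) = f(e^{it}) for e^{it} in an open arc I_k between consecutive prevertices. Then u(t) = |f'(e^{it})|^{−1/2} satisfies u'' + (1/2)Re{Sφ(t)} u = 0 with Re{Sφ(t)} > 0 on I_k; hence u is strictly concave and |f'(e^{it})| is convex on I_k. -/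
/-!
Write `z = e^{it}` and `w = z B(z)`, a point of the unit circle. The boundary relation turns the
pre-Schwarzian `φ''/φ' = i (1 + z f''/f')` of `φ` into `i (1 + w) / (1 - w)`, which is real
because `|w| = 1`. On the circle a Blaschke product satisfies `z B'/B = σ ≥ 0`, so
`w' = i w (1 + σ)` and `Sφ = 1/2 - 2σ w/(1 - w)^2`; as `w/(1 - w)^2 = 1/(2 (Re w - 1)) < 0`,
`Re Sφ ≥ 1/2`. For `u = |φ'|^{-1/2}` one has `u'/u = -(1/2) Re(φ''/φ')`, and the reality of
`φ''/φ'` makes this `u'' + (1/2) Re(Sφ) u = 0`. Hence the positive function `u` is strictly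
concave, and `|f'| = u^{-2}`, a convex decreasing function of a concave one, is convex.
-/

open Complex Metric ComplexConjugate Set Filter Topology

/-- The Schwarzian derivative of a curve `φ : ℝ → ℂ`. -/
noncomputable def curveSchwarzian (φ : ℝ → ℂ) (t : ℝ) : ℂ :=
  deriv (fun s => deriv (deriv φ) s / deriv φ s) t -
    (1 / 2) * (deriv (deriv φ) t / deriv φ t) ^ 2

theorem ConvexOn.comp_concaveOn_of_mapsTo {𝕜 E α β : Type*} [Semiring 𝕜] [PartialOrder 𝕜]
    [AddCommMonoid E] [SMul 𝕜 E] [AddCommMonoid α] [PartialOrder α] [SMul 𝕜 α]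
    [AddCommMonoid β] [PartialOrder β] [SMul 𝕜 β] {s : Set E} {t : Set β} {f : E → β} {g : β → α}
    (hg : ConvexOn 𝕜 t g) (hf : ConcaveOn 𝕜 s f) (hg' : AntitoneOn g t) (hst : MapsTo f s t) :
    ConvexOn 𝕜 s (g ∘ f) :=
  ⟨hf.1, fun _ hx _ hy _ _ ha hb hab =>
    (hg' (hg.1 (hst hx) (hst hy) ha hb hab) (hst (hf.1 hx hy ha hb hab))
      (hf.2 hx hy ha hb hab)).trans (hg.2 (hst hx) (hst hy) ha hb hab)⟩

theorem ConcaveOn.convexOn_rpow_intCast {s : Set ℝ} {u : ℝ → ℝ} (hu : ConcaveOn ℝ s u)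
    (hpos : ∀ x ∈ s, 0 < u x) {m : ℤ} (hm : m ≤ 0) : ConvexOn ℝ s fun x => u x ^ (m : ℝ) :=
  ((convexOn_zpow m).congr fun x _ => (Real.rpow_intCast x m).symm).comp_concaveOn_of_mapsTo hu
    (Real.antitoneOn_rpow_Ioi_of_exponent_nonpos (Int.cast_nonpos.2 hm)) hpos

theorem strictConcaveOn_of_deriv2_add_mul_eq_zero {D : Set ℝ} (hD : Convex ℝ D) {u q : ℝ → ℝ}
    (hu : ContinuousOn u D) (hpos : ∀ x ∈ interior D, 0 < u x) (hq : ∀ x ∈ interior D, 0 < q x)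
    (hode : ∀ x ∈ interior D, deriv (deriv u) x + q x * u x = 0) :
    StrictConcaveOn ℝ D u :=
  strictConcaveOn_of_deriv2_neg hD hu fun x hx => by
    show deriv (deriv u) x < 0
    nlinarith [hode x hx, mul_pos (hq x hx) (hpos x hx)]

theorem HasDerivAt.re {g : ℝ → ℂ} {g' : ℂ} {t : ℝ} (hg : HasDerivAt g g' t) :
    HasDerivAt (fun x => (g x).re) g'.re t :=
  reCLM.hasFDerivAt.comp_hasDerivAt t hg

theorem HasDerivAt.norm_rpow {ψ : ℝ → ℂ} {ψ' : ℂ} {t : ℝ} (hψ : HasDerivAt ψ ψ' t)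
    (h0 : ψ t ≠ 0) (p : ℝ) :
    HasDerivAt (fun x => ‖ψ x‖ ^ p) (p * (ψ' / ψ t).re * ‖ψ t‖ ^ p) t := by
  have hsq : ∀ x, ‖ψ x‖ ^ p = (‖ψ x‖ ^ 2) ^ (p / 2) := fun x => by
    rw [← Real.rpow_natCast, ← Real.rpow_mul (norm_nonneg _)]; ring_nf
  simp_rw [hsq]
  have hn : 0 < ‖ψ t‖ := norm_pos_iff.2 h0
  convert hψ.norm_sq.rpow_const (p := p / 2) (Or.inl (by positivity)) using 1
  rw [← Real.rpow_natCast, ← Real.rpow_mul hn.le, ← Real.rpow_mul hn.le,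
    show ((2 : ℕ) : ℝ) * (p / 2) = p by push_cast; ring,
    show ((2 : ℕ) : ℝ) * (p / 2 - 1) = p - 2 by push_cast; ring, Real.rpow_sub hn,
    Real.rpow_two, Complex.inner, div_re, normSq_eq_norm_sq]
  simp only [mul_re, conj_re, conj_im]
  field_simp
  ring

noncomputable def curvePreSchwarzian (φ : ℝ → ℂ) (t : ℝ) : ℂ :=
  deriv (deriv φ) t / deriv φ t

theorem curveSchwarzian_eq (φ : ℝ → ℂ) (t : ℝ) :
    curveSchwarzian φ t = deriv (curvePreSchwarzian φ) t - 1 / 2 * curvePreSchwarzian φ t ^ 2 :=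
  rfl

section NormDerivRpow

variable {φ : ℝ → ℂ} {s : Set ℝ} {u : ℝ → ℝ}

theorem hasDerivAt_norm_deriv_rpow {t : ℝ} (hφ : DifferentiableAt ℝ (deriv φ) t)
    (h0 : deriv φ t ≠ 0) (p : ℝ) :
    HasDerivAt (fun x => ‖deriv φ x‖ ^ p) (p * (curvePreSchwarzian φ t).re * ‖deriv φ t‖ ^ p) t :=
  hφ.hasDerivAt.norm_rpow h0 p

theorem deriv_deriv_add_curveSchwarzian_mul_eq_zero (hs : IsOpen s)
    (hu : EqOn u (fun x => ‖deriv φ x‖ ^ (-(1 / 2) : ℝ)) s)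
    (hφ : ∀ x ∈ s, DifferentiableAt ℝ (deriv φ) x ∧ deriv φ x ≠ 0) {t : ℝ} (ht : t ∈ s)
    (hP : DifferentiableAt ℝ (curvePreSchwarzian φ) t) (hreal : (curvePreSchwarzian φ t).im = 0) :
    deriv (deriv u) t + 1 / 2 * (curveSchwarzian φ t).re * u t = 0 := by
  have hv : ∀ x ∈ s, HasDerivAt u
      (-(1 / 2) * (curvePreSchwarzian φ x).re * ‖deriv φ x‖ ^ (-(1 / 2) : ℝ)) x := fun x hx =>
    (hasDerivAt_norm_deriv_rpow (hφ x hx).1 (hφ x hx).2 _).congr_of_eventuallyEq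
      (hu.eventuallyEq_of_mem (hs.mem_nhds hx))
  have hdu : deriv u =ᶠ[𝓝 t]
      fun x => -(1 / 2) * (curvePreSchwarzian φ x).re * ‖deriv φ x‖ ^ (-(1 / 2) : ℝ) :=
    eventually_of_mem (hs.mem_nhds ht) fun x hx => (hv x hx).deriv
  rw [hdu.deriv_eq, ((hP.hasDerivAt.re.const_mul _).fun_mul
      (hasDerivAt_norm_deriv_rpow (hφ t ht).1 (hφ t ht).2 _)).deriv,
    curveSchwarzian_eq, sub_re, hu ht]
  simp only [mul_re, sq, hreal, div_ofNat_re, div_ofNat_im, one_re, one_im]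
  ring

theorem strictConcaveOn_of_eqOn_norm_deriv_rpow_neg_half (hs : IsOpen s) (hsc : Convex ℝ s)
    (hu : EqOn u (fun x => ‖deriv φ x‖ ^ (-(1 / 2) : ℝ)) s)
    (hφ : ∀ x ∈ s, DifferentiableAt ℝ (deriv φ) x ∧ deriv φ x ≠ 0)
    (hP : ∀ x ∈ s, DifferentiableAt ℝ (curvePreSchwarzian φ) x ∧ (curvePreSchwarzian φ x).im = 0)
    (hS : ∀ x ∈ s, 0 < (curveSchwarzian φ x).re) :
    StrictConcaveOn ℝ s u := by
  refine strictConcaveOn_of_deriv2_add_mul_eq_zero hsc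
    (q := fun x => 1 / 2 * (curveSchwarzian φ x).re) (fun x hx => ?_) ?_ ?_ ?_
  · exact (hasDerivAt_norm_deriv_rpow (hφ x hx).1 (hφ x hx).2 _).continuousAt
      |>.congr_of_eventuallyEq (hu.eventuallyEq_of_mem (hs.mem_nhds hx)) |>.continuousWithinAt
  all_goals rw [hs.interior_eq]
  · exact fun x hx => hu hx ▸ Real.rpow_pos_of_pos (norm_pos_iff.2 (hφ x hx).2) _
  · exact fun x hx => mul_pos one_half_pos (hS x hx)
  · exact fun x hx =>
      deriv_deriv_add_curveSchwarzian_mul_eq_zero hs hu hφ hx (hP x hx).1 (hP x hx).2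

end NormDerivRpow

theorem HasDerivAt.comp_exp_mul_I {g : ℂ → ℂ} {g' : ℂ} {t : ℝ}
    (hg : HasDerivAt g g' (Complex.exp (t * I))) :
    HasDerivAt (fun x : ℝ => g (Complex.exp (x * I))) (g' * (Complex.exp (t * I) * I)) t := by
  have hexp : HasDerivAt (fun x : ℂ => Complex.exp (x * I)) (Complex.exp (t * I) * I) t := by
    simpa using ((hasDerivAt_id (t : ℂ)).mul_const I).cexp
  exact hg.comp t hexp.comp_ofReal

section CompExp

variable {f : ℂ → ℂ} {s : Set ℝ} {t : ℝ}

theorem norm_deriv_comp_exp_mul_I (hf : DifferentiableAt ℂ f (exp (t * I))) :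
    ‖deriv (fun x : ℝ => f (exp (x * I))) t‖ = ‖deriv f (exp (t * I))‖ := by
  rw [(HasDerivAt.comp_exp_mul_I hf.hasDerivAt).deriv, norm_mul, norm_mul,
    norm_exp_ofReal_mul_I, norm_I, mul_one, mul_one]

theorem deriv_comp_exp_mul_I_ne_zero (hf : DifferentiableAt ℂ f (exp (t * I)))
    (hf' : deriv f (exp (t * I)) ≠ 0) : deriv (fun x : ℝ => f (exp (x * I))) t ≠ 0 :=
  norm_ne_zero_iff.1 ((norm_deriv_comp_exp_mul_I hf).symm ▸ norm_ne_zero_iff.2 hf')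

theorem hasDerivAt_deriv_comp_exp_mul_I (hs : IsOpen s)
    (hf : ∀ x ∈ s, AnalyticAt ℂ f (exp (x * I))) (ht : t ∈ s) :
    HasDerivAt (deriv fun x : ℝ => f (exp (x * I)))
      ((deriv (deriv f) (exp (t * I)) * (exp (t * I) * I) + deriv f (exp (t * I)) * I) *
        (exp (t * I) * I)) t := by
  have hφ' : deriv (fun x : ℝ => f (exp (x * I))) =ᶠ[𝓝 t]
      fun x => deriv f (exp (x * I)) * (exp (x * I) * I) :=
    eventually_of_mem (hs.mem_nhds ht) fun x hx =>
      (HasDerivAt.comp_exp_mul_I (hf x hx).differentiableAt.hasDerivAt).deriv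
  have hf' := HasDerivAt.comp_exp_mul_I (hf t ht).deriv.differentiableAt.hasDerivAt
  have hz := (hasDerivAt_id (exp (t * I))).comp_exp_mul_I
  refine ((hf'.fun_mul (hz.mul_const I)).congr_of_eventuallyEq hφ').congr_deriv ?_
  simp only [id]
  ring

theorem curvePreSchwarzian_comp_exp_mul_I (hs : IsOpen s)
    (hf : ∀ x ∈ s, AnalyticAt ℂ f (exp (x * I))) (ht : t ∈ s) (hf' : deriv f (exp (t * I)) ≠ 0) :
    curvePreSchwarzian (fun x : ℝ => f (exp (x * I))) t =
      I * (1 + exp (t * I) * (deriv (deriv f) (exp (t * I)) / deriv f (exp (t * I)))) := by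
  rw [curvePreSchwarzian, (hasDerivAt_deriv_comp_exp_mul_I hs hf ht).deriv,
    (HasDerivAt.comp_exp_mul_I (hf t ht).differentiableAt.hasDerivAt).deriv]
  field_simp [exp_ne_zero]
  ring

end CompExp

theorem HasDerivAt.finset_prod_of_mul {ι 𝕜 𝔸 : Type*} [NontriviallyNormedField 𝕜]
    [NormedCommRing 𝔸] [NormedAlgebra 𝕜 𝔸] {s : Finset ι} {g : ι → 𝕜 → 𝔸} {ρ : ι → 𝔸} {x : 𝕜}
    (hg : ∀ i ∈ s, HasDerivAt (g i) (g i x * ρ i) x) :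
    HasDerivAt (fun y => ∏ i ∈ s, g i y) ((∏ i ∈ s, g i x) * ∑ i ∈ s, ρ i) x := by
  classical
  refine (HasDerivAt.fun_finsetProd hg).congr_deriv ?_
  rw [Finset.mul_sum]
  refine Finset.sum_congr rfl fun i hi => ?_
  rw [smul_eq_mul, ← Finset.prod_erase_mul _ _ hi]
  ring

noncomputable def blaschkeFactor (a z : ℂ) : ℂ :=
  (z - a) / (1 - conj a * z)

noncomputable def blaschkeProduct {ι : Type*} [Fintype ι] (c : ℂ) (a : ι → ℂ) (z : ℂ) : ℂ :=
  c * ∏ j, blaschkeFactor (a j) z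

section UnitCircle

variable {a z : ℂ}

theorem one_sub_conj_mul_eq_mul_conj_sub (hz : ‖z‖ = 1) : 1 - conj a * z = z * conj (z - a) := by
  have hzz : z * conj z = 1 := by rw [mul_conj', hz]; norm_num
  rw [map_sub]
  linear_combination -hzz

theorem sub_ne_zero_of_norm_lt_one (ha : ‖a‖ < 1) (hz : ‖z‖ = 1) : z - a ≠ 0 :=
  sub_ne_zero.2 fun h => by rw [h] at hz; linarith

theorem norm_blaschkeFactor (ha : ‖a‖ < 1) (hz : ‖z‖ = 1) : ‖blaschkeFactor a z‖ = 1 := by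
  rw [blaschkeFactor, norm_div, one_sub_conj_mul_eq_mul_conj_sub hz, norm_mul, hz, one_mul,
    RCLike.norm_conj, div_self (norm_ne_zero_iff.2 (sub_ne_zero_of_norm_lt_one ha hz))]

theorem hasDerivAt_blaschkeFactor (ha : ‖a‖ < 1) (hz : ‖z‖ = 1) :
    HasDerivAt (blaschkeFactor a)
      (blaschkeFactor a z * (((1 - ‖a‖ ^ 2) / ‖z - a‖ ^ 2 : ℝ) / z)) z := by
  have hza := sub_ne_zero_of_norm_lt_one ha hz
  have hz0 : z ≠ 0 := norm_ne_zero_iff.1 (by rw [hz]; exact one_ne_zero)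
  have hden : 1 - conj a * z ≠ 0 := by
    rw [one_sub_conj_mul_eq_mul_conj_sub hz]
    exact mul_ne_zero hz0 ((map_ne_zero _).2 hza)
  refine (((hasDerivAt_id z).sub_const a).div
    (((hasDerivAt_id z).const_mul (conj a)).const_sub 1) hden).congr_deriv ?_
  have hzz : z * conj z = 1 := by rw [mul_conj', hz]; norm_num
  have hcza : conj z - conj a ≠ 0 := by rw [← map_sub]; exact (map_ne_zero _).2 hza
  simp only [id, mul_one, one_mul, blaschkeFactor]
  push_cast
  rw [← mul_conj', ← mul_conj', one_sub_conj_mul_eq_mul_conj_sub hz, map_sub]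
  field_simp
  linear_combination hzz

theorem norm_blaschkeProduct {ι : Type*} [Fintype ι] {c : ℂ} {a : ι → ℂ} (hc : ‖c‖ = 1)
    (ha : ∀ j, ‖a j‖ < 1) (hz : ‖z‖ = 1) : ‖blaschkeProduct c a z‖ = 1 := by
  simp [blaschkeProduct, norm_prod, hc, norm_blaschkeFactor (ha _) hz]

theorem hasDerivAt_blaschkeProduct {ι : Type*} [Fintype ι] (c : ℂ) {a : ι → ℂ}
    (ha : ∀ j, ‖a j‖ < 1) (hz : ‖z‖ = 1) :
    ∃ σ : ℝ, 0 ≤ σ ∧ HasDerivAt (blaschkeProduct c a) (blaschkeProduct c a z * (σ / z)) z := by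
  refine ⟨∑ j, (1 - ‖a j‖ ^ 2) / ‖z - a j‖ ^ 2, Finset.sum_nonneg fun j _ => ?_, ?_⟩
  · have := ha j
    have := norm_nonneg (a j)
    exact div_nonneg (by nlinarith) (sq_nonneg _)
  · have hP := HasDerivAt.finset_prod_of_mul fun j (_ : j ∈ Finset.univ) =>
      hasDerivAt_blaschkeFactor (ha j) hz
    refine (hP.const_mul c).congr_deriv ?_
    rw [blaschkeProduct, ← Finset.sum_div]
    push_cast
    ring

end UnitCircle

theorem HasDerivAt.exp_mul_I_mul_comp_exp_mul_I {B : ℂ → ℂ} {σ : ℝ} {t : ℝ}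
    (hB : HasDerivAt B (B (Complex.exp (t * I)) * (σ / Complex.exp (t * I)))
      (Complex.exp (t * I))) :
    HasDerivAt (fun x : ℝ => Complex.exp (x * I) * B (Complex.exp (x * I)))
      (I * (Complex.exp (t * I) * B (Complex.exp (t * I))) * (1 + σ)) t := by
  refine ((hasDerivAt_id _).comp_exp_mul_I.fun_mul hB.comp_exp_mul_I).congr_deriv ?_
  field_simp [Complex.exp_ne_zero]
  simp only [id]
  ring

theorem exists_hasDerivAt_exp_mul_I_mul_blaschkeProduct {ι : Type*} [Fintype ι] (c : ℂ)
    {a : ι → ℂ} (ha : ∀ j, ‖a j‖ < 1) (t : ℝ) :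
    ∃ σ : ℝ, 0 ≤ σ ∧ HasDerivAt (fun x : ℝ => exp (x * I) * blaschkeProduct c a (exp (x * I)))
      (I * (exp (t * I) * blaschkeProduct c a (exp (t * I))) * (1 + σ)) t :=
  let ⟨σ, hσ, hB⟩ := hasDerivAt_blaschkeProduct c ha (norm_exp_ofReal_mul_I t)
  ⟨σ, hσ, hB.exp_mul_I_mul_comp_exp_mul_I⟩

noncomputable def cayley (w : ℂ) : ℂ :=
  I * (1 + w) / (1 - w)

section Cayley

variable {w : ℂ}

theorem im_cayley (hw : ‖w‖ = 1) : (cayley w).im = 0 := by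
  have hxy : w.re * w.re + w.im * w.im = 1 := by rw [← normSq_apply, normSq_eq_norm_sq, hw, one_pow]
  rw [cayley, div_im, div_sub_div_same]
  simp only [mul_re, mul_im, I_re, I_im, add_re, add_im, sub_re, sub_im, one_re, one_im]
  rw [div_eq_zero_iff]
  left
  nlinarith

theorem re_div_one_sub_sq_nonpos (hw : ‖w‖ = 1) : (w / (1 - w) ^ 2).re ≤ 0 := by
  have hxy : w.re * w.re + w.im * w.im = 1 := by rw [← normSq_apply, normSq_eq_norm_sq, hw, one_pow]
  rw [div_re, ← add_div]
  refine div_nonpos_of_nonpos_of_nonneg ?_ (normSq_nonneg _)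
  simp only [sq, mul_re, mul_im, sub_re, sub_im, one_re, one_im]
  nlinarith [sq_nonneg (w.re - 1), sq_nonneg w.im]

theorem one_half_le_re_schwarzian_cayley (hw : ‖w‖ = 1) (hw1 : w ≠ 1) {σ : ℝ} (hσ : 0 ≤ σ) :
    1 / 2 ≤ (2 * I * (I * w * (1 + σ)) / (1 - w) ^ 2 - 1 / 2 * cayley w ^ 2).re := by
  have h1 : 1 - w ≠ 0 := sub_ne_zero.2 hw1.symm
  have hid : 2 * I * (I * w * (1 + σ)) / (1 - w) ^ 2 - 1 / 2 * cayley w ^ 2 =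
      (1 / 2 : ℝ) - (2 * σ : ℝ) * (w / (1 - w) ^ 2) := by
    rw [cayley]
    push_cast
    field_simp
    linear_combination (4 * w * σ + 2 * w - 1 - w ^ 2) * I_sq
  rw [hid, sub_re, ofReal_re, re_ofReal_mul]
  nlinarith [re_div_one_sub_sq_nonpos hw]

end Cayley

theorem HasDerivAt.cayley {W : ℝ → ℂ} {W' : ℂ} {t : ℝ} (hW : HasDerivAt W W' t) (h1 : W t ≠ 1) :
    HasDerivAt (fun x => _root_.cayley (W x)) (2 * I * W' / (1 - W t) ^ 2) t := by
  have h1' : 1 - W t ≠ 0 := sub_ne_zero.2 h1.symm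
  refine (((hW.const_add 1).const_mul I).div (hW.const_sub 1) h1').congr_deriv ?_
  field_simp
  ring

theorem differentiableAt_and_im_eq_zero_of_eventuallyEq_cayley {g W : ℝ → ℂ} {t : ℝ}
    (hg : g =ᶠ[𝓝 t] fun x => cayley (W x)) (hW : DifferentiableAt ℝ W t) (hw : ‖W t‖ = 1)
    (hw1 : W t ≠ 1) : DifferentiableAt ℝ g t ∧ (g t).im = 0 :=
  ⟨(hW.hasDerivAt.cayley hw1).differentiableAt.congr_of_eventuallyEq hg,
    hg.self_of_nhds ▸ im_cayley hw⟩

theorem one_half_le_re_curveSchwarzian {φ W : ℝ → ℂ} {t σ : ℝ}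
    (hP : curvePreSchwarzian φ =ᶠ[𝓝 t] fun x => cayley (W x))
    (hW : HasDerivAt W (I * W t * (1 + σ)) t) (hw : ‖W t‖ = 1) (hw1 : W t ≠ 1) (hσ : 0 ≤ σ) :
    1 / 2 ≤ (curveSchwarzian φ t).re := by
  rw [curveSchwarzian_eq, hP.deriv_eq, (hW.cayley hw1).deriv, hP.self_of_nhds]
  exact one_half_le_re_schwarzian_cayley hw hw1 hσ

theorem boundary_derivative_convexity_general (n : ℕ)
    (c : ℂ) (hc : ‖c‖ = 1) (a : Fin (n - 1) → ℂ) (ha : ∀ j, ‖a j‖ < 1)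
    (B : ℂ → ℂ)
    (hB : ∀ z, B z = c * ∏ j, (z - a j) / (1 - (starRingEnd ℂ) (a j) * z))
    (f : ℂ → ℂ)
    (t₁ t₂ : ℝ)
    -- `f` extends analytically across the open arc `I_k`, free of prevertices,
    -- and the representation persists there
    (harc : ∀ t ∈ Set.Ioo t₁ t₂, AnalyticAt ℂ f (exp (t * I)) ∧
      deriv f (exp (t * I)) ≠ 0 ∧ exp (t * I) * B (exp (t * I)) ≠ 1 ∧
      1 + exp (t * I) * (deriv (deriv f) (exp (t * I)) / deriv f (exp (t * I))) =
        (1 + exp (t * I) * B (exp (t * I))) / (1 - exp (t * I) * B (exp (t * I))))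
    (φ : ℝ → ℂ) (hφ : ∀ t, φ t = f (exp (t * I)))
    (u : ℝ → ℝ) (hu : ∀ t, u t = ‖deriv f (exp (t * I))‖ ^ (-(1 / 2) : ℝ)) :
    (∀ t ∈ Set.Ioo t₁ t₂,
        deriv (deriv u) t + (1 / 2) * (curveSchwarzian φ t).re * u t = 0 ∧
        0 < (curveSchwarzian φ t).re) ∧
      StrictConcaveOn ℝ (Set.Ioo t₁ t₂) u ∧
      ConvexOn ℝ (Set.Ioo t₁ t₂) (fun t => ‖deriv f (exp (t * I))‖) := by
  obtain rfl : B = blaschkeProduct c a := funext hB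
  have hφ' : φ = fun t : ℝ => f (exp (t * I)) := funext hφ
  set W : ℝ → ℂ := fun t : ℝ => exp (t * I) * blaschkeProduct c a (exp (t * I))
  have hW1 : ∀ t, ‖W t‖ = 1 := fun t => by
    rw [norm_mul, norm_exp_ofReal_mul_I, norm_blaschkeProduct hc ha (norm_exp_ofReal_mul_I t),
      one_mul]
  choose σ hσ hWd using exists_hasDerivAt_exp_mul_I_mul_blaschkeProduct c ha
  have hf : ∀ t ∈ Ioo t₁ t₂, AnalyticAt ℂ f (exp (t * I)) := fun t ht => (harc t ht).1
  have hP : ∀ t ∈ Ioo t₁ t₂, curvePreSchwarzian φ =ᶠ[𝓝 t] fun x => cayley (W x) :=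
    fun t ht => eventually_of_mem (isOpen_Ioo.mem_nhds ht) fun x hx => by
      rw [hφ', curvePreSchwarzian_comp_exp_mul_I isOpen_Ioo hf hx (harc x hx).2.1,
        (harc x hx).2.2.2]
      simp only [cayley, W, mul_div_assoc]
  have hPd : ∀ t ∈ Ioo t₁ t₂, DifferentiableAt ℝ (curvePreSchwarzian φ) t ∧
      (curvePreSchwarzian φ t).im = 0 := fun t ht =>
    differentiableAt_and_im_eq_zero_of_eventuallyEq_cayley (hP t ht) (hWd t).differentiableAt
      (hW1 t) (harc t ht).2.2.1
  have hS : ∀ t ∈ Ioo t₁ t₂, 0 < (curveSchwarzian φ t).re := fun t ht =>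
    one_half_pos.trans_le <|
      one_half_le_re_curveSchwarzian (hP t ht) (hWd t) (hW1 t) (harc t ht).2.2.1 (hσ t)
  have hφd : ∀ t ∈ Ioo t₁ t₂, DifferentiableAt ℝ (deriv φ) t ∧ deriv φ t ≠ 0 := fun t ht =>
    hφ' ▸ ⟨(hasDerivAt_deriv_comp_exp_mul_I isOpen_Ioo hf ht).differentiableAt,
      deriv_comp_exp_mul_I_ne_zero (hf t ht).differentiableAt (harc t ht).2.1⟩
  have hu' : EqOn u (fun t => ‖deriv φ t‖ ^ (-(1 / 2) : ℝ)) (Ioo t₁ t₂) := fun t ht => by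
    simp only [hu, hφ', norm_deriv_comp_exp_mul_I (hf t ht).differentiableAt]
  have hconc : StrictConcaveOn ℝ (Ioo t₁ t₂) u :=
    strictConcaveOn_of_eqOn_norm_deriv_rpow_neg_half isOpen_Ioo (convex_Ioo t₁ t₂) hu' hφd hPd hS
  refine ⟨fun t ht => ⟨deriv_deriv_add_curveSchwarzian_mul_eq_zero isOpen_Ioo hu' hφd ht
    (hPd t ht).1 (hPd t ht).2, hS t ht⟩, hconc, ?_⟩
  refine (hconc.concaveOn.convexOn_rpow_intCast (m := -2) (fun t ht => ?_) (by norm_num)).congr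
    fun t _ => ?_
  · exact hu t ▸ Real.rpow_pos_of_pos (norm_pos_iff.2 (harc t ht).2.1) _
  · simp only [hu, ← Real.rpow_mul (norm_nonneg _)]
    norm_num

/-- For a convex polygonal mapping `f`, on each prevertex-free boundary arc
`u(t) = |f'(e^{it})|^{−1/2}` satisfies `u'' + (1/2)Re{Sφ}u = 0` with
`Re{Sφ} > 0`; hence `u` is strictly concave and `|f'(e^{it})|` is convex. -/
theorem boundary_derivative_convexity (n : ℕ) (hn : 2 ≤ n)
    (c : ℂ) (hc : ‖c‖ = 1) (a : Fin (n - 1) → ℂ) (ha : ∀ j, ‖a j‖ < 1)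
    (B : ℂ → ℂ)
    (hB : ∀ z, B z = c * ∏ j, (z - a j) / (1 - (starRingEnd ℂ) (a j) * z))
    (f : ℂ → ℂ)
    -- the Blaschke representation of convexity on the disk
    (hrep : ∀ z ∈ ball (0 : ℂ) 1, z ≠ 0 → deriv f z ≠ 0 ∧
      1 + z * (deriv (deriv f) z / deriv f z) = (1 + z * B z) / (1 - z * B z))
    (t₁ t₂ : ℝ) (ht : t₁ < t₂)
    -- `f` extends analytically across the open arc `I_k`, free of prevertices,
    -- and the representation persists there
    (harc : ∀ t ∈ Set.Ioo t₁ t₂, AnalyticAt ℂ f (exp (t * I)) ∧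
      deriv f (exp (t * I)) ≠ 0 ∧ exp (t * I) * B (exp (t * I)) ≠ 1 ∧
      1 + exp (t * I) * (deriv (deriv f) (exp (t * I)) / deriv f (exp (t * I))) =
        (1 + exp (t * I) * B (exp (t * I))) / (1 - exp (t * I) * B (exp (t * I))))
    (φ : ℝ → ℂ) (hφ : ∀ t, φ t = f (exp (t * I)))
    (u : ℝ → ℝ) (hu : ∀ t, u t = ‖deriv f (exp (t * I))‖ ^ (-(1 / 2) : ℝ)) :
    (∀ t ∈ Set.Ioo t₁ t₂,
        deriv (deriv u) t + (1 / 2) * (curveSchwarzian φ t).re * u t = 0 ∧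
        0 < (curveSchwarzian φ t).re) ∧
      StrictConcaveOn ℝ (Set.Ioo t₁ t₂) u ∧
      ConvexOn ℝ (Set.Ioo t₁ t₂) (fun t => ‖deriv f (exp (t * I))‖) :=
  boundary_derivative_convexity_general n c hc a ha B hB f t₁ t₂ harc φ hφ u hu
end
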